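/- arXiv:2106.00399 — 10 statements merged into one kernel-verified Lean document; each statement's English description precedes it below -/
import Mathlib

section
/- Let K be an absorptive, fully-continuous commutative semiring and let (X_i = P_i)_{1 ≤ i ≤ ℓ} be a polynomial equation system over K in ℓ indeterminates, with induced monotone operator F : K^ℓ → K^ℓ. Then the least fixed point of F (equivalently, the least solution of the system with respect to the componentwise natural order) equals the ℓ-fold iterate of F applied to the zero tuple: lfp F = F^ℓ(0). -/
/-- An absorptive, fully-continuous commutative semiring: a commutative semiring
whose natural order (`a ≤ b ↔ a + b = b`) is a complete lattice, with `1 + a = 1`,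
and such that addition and multiplication commute with suprema and infima of
nonempty chains. -/
class AbsorptiveFC (K : Type*) extends CommSemiring K, CompleteLattice K where
  absorb : ∀ a : K, 1 + a = 1
  le_iff_add : ∀ a b : K, a ≤ b ↔ a + b = b
  add_sSup_chain : ∀ (a : K) (C : Set K), C.Nonempty → IsChain (· ≤ ·) C →
    a + sSup C = sSup ((fun c => a + c) '' C)
  add_sInf_chain : ∀ (a : K) (C : Set K), C.Nonempty → IsChain (· ≤ ·) C →
    a + sInf C = sInf ((fun c => a + c) '' C)
  mul_sSup_chain : ∀ (a : K) (C : Set K), C.Nonempty → IsChain (· ≤ ·) C →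
    a * sSup C = sSup ((fun c => a * c) '' C)
  mul_sInf_chain : ∀ (a : K) (C : Set K), C.Nonempty → IsChain (· ≤ ·) C →
    a * sInf C = sInf ((fun c => a * c) '' C)

/-- The infinitary power `a^∞ = ⨅ n, a ^ n`. -/
noncomputable def ipow {K : Type*} [AbsorptiveFC K] (a : K) : K := ⨅ n : ℕ, a ^ n

/-!
Let `F_S = restrictTo S F` keep the equations of the variables in `S` and set the others to `0`;
its iterates from `0` sum the derivation trees all of whose variables lie in `S`. By induction on
`S`, `F_S^[k] 0 i ≤ F^[#S] 0 i` for all `i ∈ S` and all `k`. Absorption gives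
`F (x + u) ≤ F x + u` for a constant tuple `u`, so the derivations that use the root variable `i`
again below the root are absorbed by `c = F (F^[#S - 1] 0) i`, and the others are derivations of
`F_{S.erase i}`, bounded by the induction hypothesis. For `S = univ`, `F^[ℓ] 0` bounds every
iterate, so it is a fixed point, hence the least one.
-/

open Finset

section Absorptive

variable {K : Type*} [AbsorptiveFC K]

theorem AbsorptiveFC.add_self (a : K) : a + a = a := by
  calc a + a = a * (1 + 1) := by ring
    _ = a := by rw [AbsorptiveFC.absorb, mul_one]

abbrev AbsorptiveFC.toIdemCommSemiring : IdemCommSemiring K :=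
  { (inferInstance : CommSemiring K), (inferInstance : CompleteLattice K) with
    add_eq_sup := fun a b => by
      have hle := AbsorptiveFC.le_iff_add (K := K)
      apply le_antisymm
      · rw [hle, add_assoc, (hle b _).1 le_sup_right, (hle a _).1 le_sup_left]
      · refine sup_le ((hle _ _).2 ?_) ((hle _ _).2 ?_)
        · rw [← add_assoc, AbsorptiveFC.add_self]
        · rw [add_comm a, ← add_assoc, AbsorptiveFC.add_self] }

attribute [local instance] AbsorptiveFC.toIdemCommSemiring

theorem AbsorptiveFC.le_one (a : K) : a ≤ 1 :=
  add_eq_left_iff_le.1 (AbsorptiveFC.absorb a)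

theorem AbsorptiveFC.add_mul_add_le (a b u : K) : (a + u) * (b + u) ≤ a * b + u := by
  have hau : a * u ≤ u := mul_le_of_le_one_left' (AbsorptiveFC.le_one a)
  have hub : u * (b + u) ≤ u := mul_le_of_le_one_right' (AbsorptiveFC.le_one _)
  calc (a + u) * (b + u) = a * b + (a * u + u * (b + u)) := by ring
    _ ≤ a * b + u := add_le_add_right (add_le hau hub) _

theorem MvPolynomial.eval_add_const_le {σ : Type*} (x : σ → K) (u : K) (p : MvPolynomial σ K) :
    eval (x + fun _ => u) p ≤ eval x p + u := by
  induction p using MvPolynomial.induction_on with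
  | C a => simp
  | add p q hp hq =>
    calc eval (x + fun _ => u) (p + q) ≤ (eval x p + u) + (eval x q + u) := by
          rw [map_add]; exact add_le_add hp hq
      _ = eval x (p + q) + u := by rw [add_add_add_comm, add_idem, map_add]
  | mul_X p n hp =>
    simp only [map_mul, eval_X, Pi.add_apply]
    exact (mul_le_mul_left hp _).trans (AbsorptiveFC.add_mul_add_le _ _ _)

end Absorptive

theorem OrderHom.iterate_bot_le_lfp {α : Type*} [CompleteLattice α] (f : α →o α) (n : ℕ) :
    f^[n] ⊥ ≤ f.lfp := by
  induction n with
  | zero => exact bot_le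
  | succ n ih => exact (Function.iterate_succ_apply' f n ⊥).symm ▸ f.map_le_lfp ih

theorem OrderHom.lfp_eq_iterate_bot_of_map_le {α : Type*} [CompleteLattice α] (f : α →o α)
    {n : ℕ} (h : f (f^[n] ⊥) ≤ f^[n] ⊥) : f.lfp = f^[n] ⊥ :=
  le_antisymm (f.lfp_le h) (f.iterate_bot_le_lfp n)

section Restrict

variable {ι K : Type*} [DecidableEq ι]

def restrictTo [Zero K] (S : Finset ι) (F : (ι → K) → ι → K) (x : ι → K) : ι → K :=
  S.piecewise (F x) 0

theorem iterate_restrictTo_zero_apply_of_notMem [Zero K] {S : Finset ι}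
    (F : (ι → K) → ι → K) {j : ι} (hj : j ∉ S) (k : ℕ) : (restrictTo S F)^[k] 0 j = 0 := by
  cases k with
  | zero => rfl
  | succ k => rw [Function.iterate_succ_apply', restrictTo, piecewise_eq_of_notMem _ _ _ hj]; rfl

theorem restrictTo_univ [Zero K] [Fintype ι] (F : (ι → K) → ι → K) : restrictTo univ F = F :=
  funext fun x => piecewise_univ (F x) 0

attribute [local instance] AbsorptiveFC.toIdemCommSemiring

variable [AbsorptiveFC K] {F : (ι → K) → ι → K}

theorem iterate_restrictTo_le_erase_add (hmono : Monotone F)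
    (hshift : ∀ x u, F (x + fun _ => u) ≤ F x + fun _ => u) {S : Finset ι} {i : ι} {y : ι → K}
    (hy : ∀ k, (restrictTo (S.erase i) F)^[k] 0 ≤ y) (k : ℕ) :
    (restrictTo S F)^[k] 0 ≤ (restrictTo (S.erase i) F)^[k] 0 + fun _ => F y i := by
  induction k with
  | zero => exact fun _ => zero_le
  | succ k ih =>
    intro j
    have hstep : F ((restrictTo S F)^[k] 0) j ≤ F ((restrictTo (S.erase i) F)^[k] 0) j + F y i :=
      (hmono ih j).trans (hshift _ _ j)
    simp only [Function.iterate_succ_apply', Pi.add_apply]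
    by_cases hj : j ∈ S
    swap
    · simp only [restrictTo, piecewise_eq_of_notMem _ _ _ hj, Pi.zero_apply, zero_le]
    rw [restrictTo, piecewise_eq_of_mem _ _ _ hj]
    by_cases hji : j = i
    · subst hji
      calc F ((restrictTo S F)^[k] 0) j ≤ F y j + F y j :=
            hstep.trans (add_le_add_left (hmono (hy k) j) _)
        _ = F y j := add_idem _
        _ ≤ _ := le_add_self
    · rwa [restrictTo, piecewise_eq_of_mem _ _ _ (mem_erase.2 ⟨hji, hj⟩)]

theorem iterate_restrictTo_zero_apply_le (hmono : Monotone F)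
    (hshift : ∀ x u, F (x + fun _ => u) ≤ F x + fun _ => u) (S : Finset ι) {i : ι} (hi : i ∈ S)
    (k : ℕ) : (restrictTo S F)^[k] 0 i ≤ F^[#S] 0 i := by
  induction S using Finset.strongInduction generalizing i k with
  | H S ih =>
  have hy : ∀ k, (restrictTo (S.erase i) F)^[k] 0 ≤ F^[#(S.erase i)] 0 := fun k j => by
    by_cases hj : j ∈ S.erase i
    · exact ih _ (erase_ssubset hi) hj k
    · rw [iterate_restrictTo_zero_apply_of_notMem F hj]; exact zero_le
  calc (restrictTo S F)^[k] 0 i ≤ (restrictTo (S.erase i) F)^[k] 0 i + F (F^[#(S.erase i)] 0) i :=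
        iterate_restrictTo_le_erase_add hmono hshift hy k i
    _ = F^[#S] 0 i := by
        rw [iterate_restrictTo_zero_apply_of_notMem F (notMem_erase i S), zero_add,
          ← card_erase_add_one hi, Function.iterate_succ_apply']

theorem iterate_zero_le_iterate_card [Fintype ι] (hmono : Monotone F)
    (hshift : ∀ x u, F (x + fun _ => u) ≤ F x + fun _ => u) (k : ℕ) :
    F^[k] 0 ≤ F^[Fintype.card ι] 0 := fun i => by
  simpa only [restrictTo_univ, card_univ] using
    iterate_restrictTo_zero_apply_le hmono hshift univ (mem_univ i) k

theorem lfp_eq_iterate_card [Fintype ι] (hmono : Monotone F)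
    (hshift : ∀ x u, F (x + fun _ => u) ≤ F x + fun _ => u) :
    OrderHom.lfp ⟨F, hmono⟩ = F^[Fintype.card ι] 0 := by
  have hbot : (0 : ι → K) = ⊥ := funext fun _ => bot_eq_zero.symm
  rw [hbot]
  apply OrderHom.lfp_eq_iterate_bot_of_map_le
  have h := iterate_zero_le_iterate_card hmono hshift (Fintype.card ι + 1)
  rw [Function.iterate_succ_apply', hbot] at h
  exact h

end Restrict

/-- the least solution of a polynomial equation system in `ℓ`
indeterminates over an absorptive, fully-continuous commutative semiring is
reached after `ℓ` steps of the fixed-point iteration from the zero tuple. -/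
theorem lfp_eq_iterate {K : Type*} [AbsorptiveFC K] (ℓ : ℕ)
    (P : Fin ℓ → MvPolynomial (Fin ℓ) K)
    (F : (Fin ℓ → K) → (Fin ℓ → K))
    (hF : ∀ x i, F x i = MvPolynomial.eval x (P i))
    (hmono : Monotone F) :
    OrderHom.lfp ⟨F, hmono⟩ = F^[ℓ] 0 := by
  have hshift : ∀ x u, F (x + fun _ => u) ≤ F x + fun _ => u := fun x u i => by
    simpa only [hF, Pi.add_apply] using MvPolynomial.eval_add_const_le x u (P i)
  simpa only [Fintype.card_fin] using lfp_eq_iterate_card hmono hshift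
end

section
/- Let h : K₁ → K₂ be a fully-continuous semiring homomorphism between absorptive, fully-continuous commutative semirings. Let E : (X_i = P_i)_{1 ≤ i ≤ ℓ} be a polynomial equation system over K₁, and let h(E) : (X_i = h(P_i))_{1 ≤ i ≤ ℓ} be the system over K₂ obtained by applying h to all coefficients (i.e. replacing each polynomial P_i by its image under the coefficient map MvPolynomial.map h). Then the greatest fixed point is preserved: gfp F_{h(E)} = h(gfp F_E), where h is applied componentwise to the solution tuple. -/
namespace AFC

variable {K : Type*} [AbsorptiveFC K]

lemma add_one (a : K) : a + 1 = 1 := by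
  rw [add_comm]; exact AbsorptiveFC.absorb a

lemma add_idem (a : K) : a + a = a := by
  have h1 : (1 : K) + 1 = 1 := AbsorptiveFC.absorb 1
  calc a + a = a * (1 + 1) := by ring
    _ = a := by rw [h1, mul_one]

lemma top_eq_one : (⊤ : K) = 1 := by
  apply le_antisymm
  · rw [AbsorptiveFC.le_iff_add]; exact add_one ⊤
  · exact le_top

lemma add_mono {a b c d : K} (hab : a ≤ b) (hcd : c ≤ d) : a + c ≤ b + d := by
  rw [AbsorptiveFC.le_iff_add] at *
  calc a + c + (b + d) = (a + b) + (c + d) := by ring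
    _ = b + d := by rw [hab, hcd]

lemma mul_mono {a b c d : K} (hab : a ≤ b) (hcd : c ≤ d) : a * c ≤ b * d := by
  rw [AbsorptiveFC.le_iff_add] at *
  have h1 : a * c + b * c = b * c := by rw [← add_mul, hab]
  have h2 : b * c + b * d = b * d := by rw [← mul_add, hcd]
  calc a * c + b * d = a * c + (b * c + b * d) := by rw [h2]
    _ = (a * c + b * c) + b * d := by ring
    _ = b * c + b * d := by rw [h1]
    _ = b * d := h2

lemma chain_range {u : ℕ → K} (hu : Antitone u) : IsChain (· ≤ ·) (Set.range u) := by
  rintro x ⟨n, rfl⟩ y ⟨m, rfl⟩ _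
  rcases le_total n m with hnm | hnm
  · exact Or.inr (hu hnm)
  · exact Or.inl (hu hnm)

lemma op_iInf (op : K → K → K)
    (hdist : ∀ (a : K) (C : Set K), C.Nonempty → IsChain (· ≤ ·) C →
      op a (sInf C) = sInf ((fun c => op a c) '' C))
    (a : K) (u : ℕ → K) (hu : Antitone u) :
    op a (⨅ n, u n) = ⨅ n, op a (u n) := by
  have := hdist a (Set.range u) ⟨u 0, Set.mem_range_self 0⟩ (chain_range hu)
  rw [iInf, iInf, this, ← Set.range_comp]
  rfl

lemma iInf_op_iInf (op : K → K → K) (hcomm : ∀ a b : K, op a b = op b a)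
    (hdist : ∀ (a : K) (C : Set K), C.Nonempty → IsChain (· ≤ ·) C →
      op a (sInf C) = sInf ((fun c => op a c) '' C))
    (hmono : ∀ {a b c d : K}, a ≤ b → c ≤ d → op a c ≤ op b d)
    (u v : ℕ → K) (hu : Antitone u) (hv : Antitone v) :
    op (⨅ n, u n) (⨅ n, v n) = ⨅ n, op (u n) (v n) := by
  apply le_antisymm
  · exact le_iInf fun n => hmono (iInf_le u n) (iInf_le v n)
  · rw [op_iInf op hdist _ v hv]
    refine le_iInf fun m => ?_
    rw [hcomm, op_iInf op hdist _ u hu]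
    refine le_iInf fun n => ?_
    refine le_trans (iInf_le _ (max n m)) ?_
    rw [hcomm]
    exact hmono (hv (le_max_right n m)) (hu (le_max_left n m))

lemma iInf_add_iInf (u v : ℕ → K) (hu : Antitone u) (hv : Antitone v) :
    (⨅ n, u n) + (⨅ n, v n) = ⨅ n, u n + v n :=
  iInf_op_iInf (· + ·) add_comm AbsorptiveFC.add_sInf_chain
    (fun h1 h2 => add_mono h1 h2) u v hu hv

lemma iInf_mul_iInf (u v : ℕ → K) (hu : Antitone u) (hv : Antitone v) :
    (⨅ n, u n) * (⨅ n, v n) = ⨅ n, u n * v n :=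
  iInf_op_iInf (· * ·) mul_comm AbsorptiveFC.mul_sInf_chain
    (fun h1 h2 => mul_mono h1 h2) u v hu hv

variable {ℓ : ℕ}

lemma eval_mono (p : MvPolynomial (Fin ℓ) K) :
    Monotone (fun x : Fin ℓ → K => MvPolynomial.eval x p) := by
  induction p using MvPolynomial.induction_on with
  | C a => simpa using monotone_const
  | add p q hp hq =>
    intro x y hxy
    simp only [map_add]
    exact add_mono (hp hxy) (hq hxy)
  | mul_X p i hp =>
    intro x y hxy
    simp only [map_mul, MvPolynomial.eval_X]
    exact mul_mono (hp hxy) (hxy i)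

lemma eval_iInf (p : MvPolynomial (Fin ℓ) K) (x : ℕ → Fin ℓ → K) (hx : Antitone x) :
    MvPolynomial.eval (⨅ n, x n) p = ⨅ n, MvPolynomial.eval (x n) p := by
  induction p using MvPolynomial.induction_on with
  | C a => simp
  | add p q hp hq =>
    simp only [map_add, hp, hq]
    exact iInf_add_iInf _ _ (fun n m hnm => eval_mono p (hx hnm))
      (fun n m hnm => eval_mono q (hx hnm))
  | mul_X p i hp =>
    simp only [map_mul, MvPolynomial.eval_X, hp]
    have hxi : (⨅ n, x n) i = ⨅ n, x n i := by simp [iInf_apply]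
    rw [hxi]
    exact iInf_mul_iInf _ _ (fun n m hnm => eval_mono p (hx hnm))
      (fun n m hnm => hx hnm i)

lemma eval_hom {K₂ : Type*} [AbsorptiveFC K₂] (h : K →+* K₂)
    (p : MvPolynomial (Fin ℓ) K) (x : Fin ℓ → K) :
    h (MvPolynomial.eval x p) = MvPolynomial.eval (fun i => h (x i)) (MvPolynomial.map h p) := by
  induction p using MvPolynomial.induction_on with
  | C a => simp
  | add p q hp hq => simp [hp, hq]
  | mul_X p i hp => simp [hp]

-- gfp characterization
lemma gfp_eq_iInf_iterate (F : (Fin ℓ → K) →o (Fin ℓ → K))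
    (hcont : ∀ (x : ℕ → Fin ℓ → K), Antitone x → F (⨅ n, x n) = ⨅ n, F (x n)) :
    OrderHom.gfp F = ⨅ n, F^[n] ⊤ := by
  have hanti : Antitone fun n => (⇑F)^[n] (⊤ : Fin ℓ → K) := by
    apply antitone_nat_of_succ_le
    intro n
    induction n with
    | zero => exact le_top
    | succ n ih =>
      simp only [Function.iterate_succ_apply'] at ih ⊢
      exact F.monotone ih
  have hfix : F (⨅ n, (⇑F)^[n] ⊤) = ⨅ n, (⇑F)^[n] ⊤ := by
    rw [hcont _ hanti]
    apply le_antisymm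
    · refine le_iInf fun n => ?_
      match n with
      | 0 => exact le_top
      | Nat.succ m =>
        refine le_trans (iInf_le _ m) ?_
        rw [Function.iterate_succ_apply']
    · refine le_iInf fun n => ?_
      refine le_trans (iInf_le _ (n + 1)) ?_
      rw [Function.iterate_succ_apply']
  apply le_antisymm
  · refine le_iInf fun n => ?_
    induction n with
    | zero => exact le_top
    | succ n ih =>
      rw [Function.iterate_succ_apply']
      calc OrderHom.gfp F = F (OrderHom.gfp F) := (OrderHom.map_gfp F).symm
        _ ≤ F ((⇑F)^[n] ⊤) := F.monotone ih
  · exact OrderHom.le_gfp F (le_of_eq hfix.symm)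

end AFC

/-- a fully-continuous semiring homomorphism between absorptive,
fully-continuous commutative semirings preserves greatest solutions of polynomial
equation systems (applied to the coefficients of the system and componentwise
to the solution tuple). -/
theorem hom_preserves_gfp {K₁ K₂ : Type*} [AbsorptiveFC K₁] [AbsorptiveFC K₂]
    (h : K₁ →+* K₂)
    (hSup : ∀ C : Set K₁, C.Nonempty → IsChain (· ≤ ·) C → h (sSup C) = sSup (⇑h '' C))
    (hInf : ∀ C : Set K₁, C.Nonempty → IsChain (· ≤ ·) C → h (sInf C) = sInf (⇑h '' C))
    (ℓ : ℕ) (P : Fin ℓ → MvPolynomial (Fin ℓ) K₁)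
    (F₁ : (Fin ℓ → K₁) → (Fin ℓ → K₁))
    (hF₁ : ∀ x i, F₁ x i = MvPolynomial.eval x (P i))
    (hmono₁ : Monotone F₁)
    (F₂ : (Fin ℓ → K₂) → (Fin ℓ → K₂))
    (hF₂ : ∀ x i, F₂ x i = MvPolynomial.eval x (MvPolynomial.map h (P i)))
    (hmono₂ : Monotone F₂) :
    OrderHom.gfp ⟨F₂, hmono₂⟩ = fun i => h (OrderHom.gfp ⟨F₁, hmono₁⟩ i) := by
  have hcont₁ : ∀ (x : ℕ → Fin ℓ → K₁), Antitone x → F₁ (⨅ n, x n) = ⨅ n, F₁ (x n) := by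
    intro x hx
    funext i
    rw [hF₁, AFC.eval_iInf _ x hx]
    simp only [iInf_apply, hF₁]
  have hcont₂ : ∀ (x : ℕ → Fin ℓ → K₂), Antitone x → F₂ (⨅ n, x n) = ⨅ n, F₂ (x n) := by
    intro x hx
    funext i
    rw [hF₂, AFC.eval_iInf _ x hx]
    simp only [iInf_apply, hF₂]
  have hg₁ : OrderHom.gfp ⟨F₁, hmono₁⟩ = ⨅ n, F₁^[n] ⊤ :=
    AFC.gfp_eq_iInf_iterate ⟨F₁, hmono₁⟩ hcont₁
  have hg₂ : OrderHom.gfp ⟨F₂, hmono₂⟩ = ⨅ n, F₂^[n] ⊤ :=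
    AFC.gfp_eq_iInf_iterate ⟨F₂, hmono₂⟩ hcont₂
  have hanti₁ : Antitone fun n => F₁^[n] (⊤ : Fin ℓ → K₁) := by
    apply antitone_nat_of_succ_le
    intro n
    induction n with
    | zero => exact le_top
    | succ n ih =>
      simp only [Function.iterate_succ_apply'] at ih ⊢
      exact hmono₁ ih
  have key : ∀ n i, h (F₁^[n] ⊤ i) = F₂^[n] ⊤ i := by
    intro n
    induction n with
    | zero =>
      intro i
      simp [Pi.top_apply, AFC.top_eq_one]
    | succ n ih =>
      intro i
      rw [Function.iterate_succ_apply', Function.iterate_succ_apply', hF₁, hF₂,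
        AFC.eval_hom h]
      have hfun : (fun j => h (F₁^[n] ⊤ j)) = F₂^[n] ⊤ := funext ih
      rw [hfun]
  rw [hg₁, hg₂]
  funext i
  have himg : h ((⨅ n, F₁^[n] ⊤) i) = ⨅ n, h (F₁^[n] ⊤ i) := by
    have hchain : IsChain (· ≤ ·) (Set.range fun n => F₁^[n] (⊤ : Fin ℓ → K₁) i) :=
      AFC.chain_range (fun n m hnm => hanti₁ hnm i)
    have hne : (Set.range fun n => F₁^[n] (⊤ : Fin ℓ → K₁) i).Nonempty :=
      ⟨F₁^[0] ⊤ i, Set.mem_range_self 0⟩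
    have := hInf _ hne hchain
    rw [iInf_apply]
    rw [iInf, this, ← Set.range_comp, iInf]
    rfl
  rw [iInf_apply, himg]
  exact iInf_congr fun n => (key n i).symm
end

section
/- Let K be an absorptive, fully-continuous commutative semiring and let P ∈ K[X] be a univariate polynomial (with polynomial evaluation x ↦ P(x)). Then P(0) is the least solution of the equation X = P(X): we have P(P(0)) = P(0), and for every a ∈ K with P(a) = a it holds that P(0) ≤ a in the natural order. -/
/-!
Writing `P = P(0) + X·Q` with `Q = P.divX`, absorption gives `c + b·c = c(1 + b) = c` for
all `b, c`. Taking `c = P(0)` shows `P(P(0)) = P(0)`, and if `a = P(a) = P(0) + Q(a)·a`,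
then by idempotence `P(0) + a = a`, i.e. `P(0) ≤ a`.
-/

open Polynomial

theorem Polynomial.eval_eq_eval_zero_add_eval_divX_mul {R : Type*} [Semiring R] (p : R[X])
    (x : R) : p.eval x = p.eval 0 + p.divX.eval x * x := by
  conv_lhs => rw [← divX_mul_X_add p]
  rw [eval_add, eval_mul_X, eval_C, coeff_zero_eq_eval_zero, add_comm]

namespace AbsorptiveFC

variable {K : Type*} [AbsorptiveFC K]

theorem add_mul_absorb (a b : K) : a + b * a = a := by
  calc a + b * a = a * (1 + b) := by ring
    _ = a := by rw [absorb, mul_one]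

theorem add_self_s4 (a : K) : a + a = a := by
  simpa using add_mul_absorb a 1

end AbsorptiveFC

/-- over an absorptive, fully-continuous commutative semiring,
`P(0)` is the least solution of the univariate equation `X = P(X)`. -/
theorem lfp_one_dim {K : Type*} [AbsorptiveFC K] (P : Polynomial K) :
    P.eval (P.eval 0) = P.eval 0 ∧ ∀ a : K, P.eval a = a → P.eval 0 ≤ a := by
  refine ⟨?_, fun a ha => ?_⟩
  · calc P.eval (P.eval 0) = P.eval 0 + P.divX.eval (P.eval 0) * P.eval 0 :=
          P.eval_eq_eval_zero_add_eval_divX_mul _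
      _ = P.eval 0 := AbsorptiveFC.add_mul_absorb _ _
  · have hfix : a = P.eval 0 + P.divX.eval a * a := by
      rw [← P.eval_eq_eval_zero_add_eval_divX_mul, ha]
    rw [AbsorptiveFC.le_iff_add]
    calc P.eval 0 + a = (P.eval 0 + P.eval 0) + P.divX.eval a * a := by
          rw [add_assoc, ← hfix]
      _ = a := by rw [AbsorptiveFC.add_self_s4, ← hfix]
end

section
/- Let K be an absorptive, fully-continuous commutative semiring and let P ∈ K[X] be a univariate polynomial with formal derivative P'. Then P(0) + (P'(1))^∞ is the greatest solution of the equation X = P(X): it satisfies P( P(0) + (P'(1))^∞ ) = P(0) + (P'(1))^∞, and every a ∈ K with a ≤ P(a) satisfies a ≤ P(0) + (P'(1))^∞. Here b^∞ := ⨅_{n ∈ ℕ} b^n is the infinitary power. -/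
namespace AbsFCAux
variable {K : Type*} [AbsorptiveFC K]

lemma le_iff {a b : K} : a ≤ b ↔ a + b = b := AbsorptiveFC.le_iff_add a b

lemma le_one (a : K) : a ≤ 1 := le_iff.2 (by rw [add_comm]; exact AbsorptiveFC.absorb a)

lemma add_idem (a : K) : a + a = a := by
  have h : (1:K) + 1 = 1 := AbsorptiveFC.absorb 1
  calc a + a = a * (1 + 1) := by ring
    _ = a := by rw [h, mul_one]

lemma self_le_add (a b : K) : a ≤ a + b := le_iff.2 (by rw [← add_assoc, add_idem])

lemma le_add_self (a b : K) : a ≤ b + a := by rw [add_comm]; exact self_le_add a b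

lemma add_le {a b c : K} (h1 : a ≤ c) (h2 : b ≤ c) : a + b ≤ c := by
  rw [le_iff] at *
  rw [add_assoc, h2, h1]

lemma add_le_add' {a b c d : K} (h1 : a ≤ b) (h2 : c ≤ d) : a + c ≤ b + d := by
  rw [le_iff] at *
  rw [add_add_add_comm, h1, h2]

lemma mul_le_mul' {a b c d : K} (h1 : a ≤ b) (h2 : c ≤ d) : a * c ≤ b * d := by
  rw [le_iff] at h1 h2 ⊢
  have hac : a * c + b * c = b * c := by rw [← add_mul, h1]
  have hbd : b * c + b * d = b * d := by rw [← mul_add, h2]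
  calc a*c + b*d = a*c + (b*c + b*d) := by rw [hbd]
    _ = (a*c + b*c) + b*d := by ring
    _ = b*c + b*d := by rw [hac]
    _ = b*d := hbd

lemma mul_le_left {a b : K} : a * b ≤ a := by
  have := mul_le_mul' (le_refl a) (le_one b); rwa [mul_one] at this

lemma mul_le_right {a b : K} : a * b ≤ b := by rw [mul_comm]; exact mul_le_left

lemma pow_le_one (a : K) (n : ℕ) : a ^ n ≤ 1 := by
  cases n with
  | zero => simp
  | succ m => calc a ^ (m+1) = a^m * a := by ring
               _ ≤ a := mul_le_right
               _ ≤ 1 := le_one a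

lemma pow_antitone (a : K) {m n : ℕ} (h : m ≤ n) : a ^ n ≤ a ^ m := by
  obtain ⟨k, rfl⟩ := Nat.exists_eq_add_of_le h
  calc a ^ (m + k) = a ^ m * a ^ k := by ring
    _ ≤ a ^ m * 1 := mul_le_mul' le_rfl (pow_le_one a k)
    _ = a ^ m := mul_one _

lemma pow_le_self (a : K) {n : ℕ} (h : 1 ≤ n) : a ^ n ≤ a := by
  have := pow_antitone a h; rwa [pow_one] at this

lemma pow_le_pow' {a b : K} (h : a ≤ b) (n : ℕ) : a ^ n ≤ b ^ n := by
  induction n with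
  | zero => simp
  | succ m ih =>
    calc a ^ (m+1) = a * a ^ m := by ring
      _ ≤ b * b ^ m := mul_le_mul' h ih
      _ = b ^ (m+1) := by ring

lemma natCast_eq_one {n : ℕ} (h : 1 ≤ n) : (n : K) = 1 := by
  induction n with
  | zero => omega
  | succ m ih =>
    rcases Nat.eq_zero_or_pos m with hm | hm
    · subst hm; simp
    · push_cast
      rw [ih hm, AbsorptiveFC.absorb]

lemma range_pow_chain (a : K) : IsChain (· ≤ ·) (Set.range fun n : ℕ => a ^ n) := by
  rintro x ⟨m, rfl⟩ y ⟨n, rfl⟩ _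
  rcases le_total m n with h | h
  · exact Or.inr (pow_antitone a h)
  · exact Or.inl (pow_antitone a h)

lemma mul_iInf_pow (a b : K) : a * (⨅ n : ℕ, b ^ n) = ⨅ n : ℕ, a * b ^ n := by
  rw [iInf, AbsorptiveFC.mul_sInf_chain a _ (Set.range_nonempty _) (range_pow_chain b),
    ← Set.range_comp, iInf]
  rfl

lemma add_iInf_pow (a b : K) : a + (⨅ n : ℕ, b ^ n) = ⨅ n : ℕ, a + b ^ n := by
  rw [iInf, AbsorptiveFC.add_sInf_chain a _ (Set.range_nonempty _) (range_pow_chain b),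
    ← Set.range_comp, iInf]
  rfl

lemma mul_ipow (d : K) : d * ipow d = ipow d := by
  rw [ipow, mul_iInf_pow]
  apply le_antisymm
  · exact le_iInf fun n => (iInf_le (fun n : ℕ => d * d ^ n) n).trans
      (by rw [← pow_succ']; exact pow_antitone d (Nat.le_succ n))
  · exact le_iInf fun n => (iInf_le _ (n+1)).trans (by rw [pow_succ'])

lemma ipow_mul_ipow (d : K) : ipow d * ipow d = ipow d := by
  apply le_antisymm
  · calc ipow d * ipow d ≤ ipow d * 1 := mul_le_mul' le_rfl (le_one _)
      _ = ipow d := mul_one _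
  · conv_rhs => rw [show ipow d * ipow d = ipow d * ⨅ n : ℕ, d ^ n from rfl, mul_iInf_pow]
    refine le_iInf fun n => ?_
    rw [mul_comm, show (d:K)^n * ipow d = d^n * ⨅ m : ℕ, d ^ m from rfl, mul_iInf_pow]
    refine le_iInf fun m => ?_
    calc ipow d ≤ d ^ (n + m) := iInf_le _ _
      _ = d ^ n * d ^ m := pow_add d n m

lemma ipow_le_pow (d : K) {n : ℕ} (h : 1 ≤ n) : ipow d ≤ (ipow d) ^ n := by
  induction n with
  | zero => omega
  | succ m ih =>
    rcases Nat.eq_zero_or_pos m with hm | hm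
    · subst hm; simp
    · calc ipow d = ipow d * ipow d := (ipow_mul_ipow d).symm
        _ ≤ ipow d * (ipow d) ^ m := mul_le_mul' le_rfl (ih hm)
        _ = (ipow d) ^ (m+1) := by ring

open Polynomial in
lemma eval_le_linear (P : Polynomial K) (x : K) :
    P.eval x ≤ P.eval 0 + (derivative P).eval 1 * x := by
  induction P using Polynomial.induction_on' with
  | add p q hp hq =>
    rw [derivative_add]
    simp only [eval_add]
    calc p.eval x + q.eval x
        ≤ (p.eval 0 + (derivative p).eval 1 * x) + (q.eval 0 + (derivative q).eval 1 * x) :=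
          add_le_add' hp hq
      _ = (p.eval 0 + q.eval 0) + ((derivative p).eval 1 + (derivative q).eval 1) * x := by ring
  | monomial n c =>
    rw [derivative_monomial]
    simp only [eval_monomial, one_pow, mul_one]
    cases n with
    | zero => simpa using self_le_add c _
    | succ m =>
      have h1 : (c : K) * (0:K) ^ (m+1) = 0 := by simp
      have h2 : (c : K) * ((m+1 : ℕ) : K) = c := by
        rw [natCast_eq_one (by omega), mul_one]
      rw [h1, h2, zero_add]
      exact mul_le_mul' le_rfl (pow_le_self x (by omega))

open Polynomial in
lemma linear_le_eval (P : Polynomial K) (x s : K) (hs : ∀ n : ℕ, 1 ≤ n → s ≤ x ^ n) :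
    P.eval 0 + (derivative P).eval 1 * s ≤ P.eval x := by
  induction P using Polynomial.induction_on' with
  | add p q hp hq =>
    rw [derivative_add]
    simp only [eval_add]
    calc (p.eval 0 + q.eval 0) + ((derivative p).eval 1 + (derivative q).eval 1) * s
        = (p.eval 0 + (derivative p).eval 1 * s) + (q.eval 0 + (derivative q).eval 1 * s) := by
          ring
      _ ≤ p.eval x + q.eval x := add_le_add' hp hq
  | monomial n c =>
    rw [derivative_monomial]
    simp only [eval_monomial, one_pow, mul_one]
    cases n with
    | zero => simpa using add_le le_rfl (by simp)
    | succ m =>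
      have h1 : (c : K) * (0:K) ^ (m+1) = 0 := by simp
      have h2 : (c : K) * ((m+1 : ℕ) : K) = c := by
        rw [natCast_eq_one (by omega), mul_one]
      rw [h1, h2, zero_add]
      exact mul_le_mul' le_rfl (hs (m+1) (by omega))

end AbsFCAux

open AbsFCAux

/-- over an absorptive, fully-continuous commutative semiring,
`P(0) + (P'(1))^∞` is the greatest solution of the univariate equation `X = P(X)`,
and it dominates every solution of the inequality `X ≤ P(X)`. -/
theorem gfp_one_dim {K : Type*} [AbsorptiveFC K] (P : Polynomial K) :
    P.eval (P.eval 0 + ipow ((Polynomial.derivative P).eval 1))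
        = P.eval 0 + ipow ((Polynomial.derivative P).eval 1) ∧
      ∀ a : K, a ≤ P.eval a → a ≤ P.eval 0 + ipow ((Polynomial.derivative P).eval 1) := by
  set c := P.eval 0 with hc
  set d := (Polynomial.derivative P).eval 1 with hd
  set s := ipow d with hsdef
  set u := c + s with hu
  have hdu : d * u = d * c + s := by rw [hu, mul_add, hsdef, mul_ipow]
  have hdcc : d * c ≤ c := mul_le_right
  have hup : P.eval u ≤ u := by
    calc P.eval u ≤ c + d * u := eval_le_linear P u
      _ = c + (d * c + s) := by rw [hdu]
      _ ≤ c + s := add_le (self_le_add c s) (add_le (hdcc.trans (self_le_add c s)) (le_add_self s c))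
  have hlo : u ≤ P.eval u := by
    have hs : ∀ n : ℕ, 1 ≤ n → s ≤ u ^ n := fun n hn =>
      (ipow_le_pow d hn).trans (pow_le_pow' (le_add_self s c) n)
    calc u = c + d * s := by rw [hsdef, mul_ipow]
      _ ≤ P.eval u := linear_le_eval P u s hs
  refine ⟨le_antisymm hup hlo, fun a ha => ?_⟩
  have key : ∀ n : ℕ, a ≤ c + d ^ n := by
    intro n
    induction n with
    | zero =>
      have : c + (1:K) = 1 := by rw [add_comm]; exact AbsorptiveFC.absorb c
      simpa [this] using le_one a
    | succ m ih =>
      calc a ≤ P.eval a := ha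
        _ ≤ c + d * a := eval_le_linear P a
        _ ≤ c + d * (c + d ^ m) := add_le_add' le_rfl (mul_le_mul' le_rfl ih)
        _ = c + (d * c + d ^ (m+1)) := by ring
        _ ≤ c + d ^ (m+1) :=
          add_le (self_le_add _ _) (add_le (hdcc.trans (self_le_add _ _)) (le_add_self _ _))
  have : a ≤ ⨅ n : ℕ, c + d ^ n := le_iInf key
  rwa [← add_iInf_pow] at this
end

section
/- Let K be an absorptive commutative semiring (no continuity required). Then for all a, b, c ∈ K: if b ≤ c + a·b, then b ≤ c + a^n·b for every natural number n, where ≤ is the natural order. -/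
/-- An absorptive commutative semiring: a commutative semiring with `1 + a = 1`
for all `a`, equipped with its natural order `a ≤ b ↔ a + b = b` (a partial
order by idempotence). -/
class AbsorptiveSemiring (K : Type*) extends CommSemiring K, PartialOrder K where
  absorb : ∀ a : K, 1 + a = 1
  le_iff_add : ∀ a b : K, a ≤ b ↔ a + b = b

section aux
variable {K : Type*} [AbsorptiveSemiring K]

lemma abs_idem (x : K) : x + x = x := by
  have := AbsorptiveSemiring.absorb (1 : K)
  calc x + x = x * (1 + 1) := by ring
    _ = x := by rw [this]; ring

lemma asr_le (x y : K) : x ≤ y ↔ x + y = y := AbsorptiveSemiring.le_iff_add x y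

lemma abs_add_le_add (c : K) {x y : K} (h : x ≤ y) : c + x ≤ c + y := by
  rw [asr_le] at h ⊢
  calc (c + x) + (c + y) = (c + c) + (x + y) := by ring
    _ = c + y := by rw [abs_idem, h]

lemma abs_mul_le (a : K) {x y : K} (h : x ≤ y) : a * x ≤ a * y := by
  rw [asr_le] at h ⊢
  rw [← mul_add, h]

lemma abs_mul_le_self (a c : K) : a * c ≤ c := by
  rw [asr_le]
  have := AbsorptiveSemiring.absorb a
  calc a * c + c = c * (1 + a) := by ring
    _ = c := by rw [this]; ring
end aux

/-- in an absorptive commutative semiring, `b ≤ c + a·b` implies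
`b ≤ c + aⁿ·b` for every natural number `n`. -/
theorem pow_ind {K : Type*} [AbsorptiveSemiring K] (a b c : K)
    (h : b ≤ c + a * b) : ∀ n : ℕ, b ≤ c + a ^ n * b := by
  intro n
  induction n with
  | zero =>
    rw [pow_zero, one_mul, asr_le]
    calc b + (c + b) = c + (b + b) := by ring
      _ = c + b := by rw [abs_idem]
  | succ n ih =>
    have h1 : a * b ≤ a * (c + a ^ n * b) := abs_mul_le a ih
    have h2 : a * (c + a ^ n * b) = a * c + a ^ (n + 1) * b := by ring
    have h3 : c + a * b ≤ c + (a * c + a ^ (n + 1) * b) := by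
      refine abs_add_le_add c ?_
      rw [← h2]; exact h1
    have h4 : c + (a * c + a ^ (n + 1) * b) = c + a ^ (n + 1) * b := by
      have hac : a * c + c = c := (asr_le _ _).mp (abs_mul_le_self a c)
      calc c + (a * c + a ^ (n + 1) * b) = (a * c + c) + a ^ (n + 1) * b := by ring
        _ = c + a ^ (n + 1) * b := by rw [hac]
    exact le_trans h (h4 ▸ h3)
end

section
/- (Elimination of indeterminates for greatest solutions.) Let L be a complete lattice and let P, Q : L → L → L be functions that are monotone in each argument. Define H : L → L by H(y) = gfp(x ↦ P(x, y)) and set b = gfp(y ↦ Q(H(y), y)), where gfp denotes the greatest fixed point (which exists by Knaster–Tarski since all the maps involved are monotone). Then (H(b), b) is the greatest solution of the system x = P(x, y), y = Q(x, y): it satisfies P(H(b), b) = H(b) and Q(H(b), b) = b, and for every pair (c, d) with P(c, d) = c and Q(c, d) = d it holds that c ≤ H(b) and d ≤ b. -/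
/-- Greatest fixed point of a map on a complete lattice (Knaster–Tarski formula). -/
def gfpOf {L : Type*} [CompleteLattice L] (f : L → L) : L := sSup {x | x ≤ f x}

lemma le_gfpOf {L : Type*} [CompleteLattice L] {f : L → L} {a : L} (h : a ≤ f a) :
    a ≤ gfpOf f := le_sSup h

lemma gfpOf_le_map {L : Type*} [CompleteLattice L] {f : L → L} (hf : Monotone f) :
    gfpOf f ≤ f (gfpOf f) :=
  sSup_le fun x hx => le_trans hx (hf (le_sSup hx))

lemma gfpOf_fixed {L : Type*} [CompleteLattice L] {f : L → L} (hf : Monotone f) :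
    f (gfpOf f) = gfpOf f :=
  le_antisymm (le_gfpOf (hf (gfpOf_le_map hf))) (gfpOf_le_map hf)

/-- elimination of indeterminates for greatest solutions:
if `H(y) = gfp(x ↦ P(x,y))` and `b = gfp(y ↦ Q(H(y), y))`, then `(H(b), b)` is the
greatest solution of the system `x = P(x,y)`, `y = Q(x,y)`. -/
theorem elimination_gfp {L : Type*} [CompleteLattice L]
    (P Q : L → L → L)
    (hP₁ : ∀ y, Monotone fun x => P x y) (hP₂ : ∀ x, Monotone fun y => P x y)
    (hQ₁ : ∀ y, Monotone fun x => Q x y) (hQ₂ : ∀ x, Monotone fun y => Q x y)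
    (H : L → L) (hH : ∀ y, H y = gfpOf fun x => P x y)
    (b : L) (hb : b = gfpOf fun y => Q (H y) y) :
    P (H b) b = H b ∧ Q (H b) b = b ∧
      ∀ c d : L, P c d = c → Q c d = d → c ≤ H b ∧ d ≤ b := by
  have hHfix : ∀ y, P (H y) y = H y := by
    intro y; rw [hH y]; exact gfpOf_fixed (hP₁ y)
  have hHmono : Monotone H := by
    intro y y' hy
    rw [hH y']
    exact le_gfpOf (le_trans (le_of_eq (hHfix y).symm) (hP₂ (H y) hy))
  have hQmono : Monotone fun y => Q (H y) y := fun y y' hy =>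
    le_trans (hQ₁ y (hHmono hy)) (hQ₂ (H y') hy)
  have hbfix : Q (H b) b = b := by rw [hb]; exact gfpOf_fixed hQmono
  refine ⟨hHfix b, hbfix, fun c d hc hd => ?_⟩
  have hcHd : c ≤ H d := by rw [hH d]; exact le_gfpOf (le_of_eq hc.symm)
  have hdb : d ≤ b := by
    rw [hb]
    exact le_gfpOf (le_trans (le_of_eq hd.symm) (hQ₁ d hcHd))
  exact ⟨le_trans hcHd (hHmono hdb), hdb⟩
end

section
/- Let L₁ and L₂ be complete lattices and let f : L₁ → L₂ be a map that preserves suprema of finite sets (i.e. f(⊥) = ⊥ and f(a ⊔ b) = f(a) ⊔ f(b) for all a, b) and preserves suprema of nonempty chains (i.e. f(sSup C) = sSup (f '' C) for every nonempty chain C ⊆ L₁). Then f preserves suprema of arbitrary sets: f(sSup S) = sSup (f '' S) for every S ⊆ L₁. -/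
/-- a map between complete lattices that preserves finite suprema
(`⊥` and binary `⊔`) and suprema of nonempty chains preserves suprema of
arbitrary sets. -/
theorem sSup_preserving_of_chain_preserving {L₁ L₂ : Type*}
    [CompleteLattice L₁] [CompleteLattice L₂] (f : L₁ → L₂)
    (hbot : f ⊥ = ⊥)
    (hsup : ∀ a b : L₁, f (a ⊔ b) = f a ⊔ f b)
    (hchain : ∀ C : Set L₁, C.Nonempty → IsChain (· ≤ ·) C →
      f (sSup C) = sSup (f '' C)) :
    ∀ S : Set L₁, f (sSup S) = sSup (f '' S) := by
  have hmono : Monotone f := fun a b hab => by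
    have : f b = f a ⊔ f b := by rw [← hsup, sup_eq_right.mpr hab]
    exact le_sup_left.trans this.ge
  intro S
  refine le_antisymm ?_ (sSup_le fun y ⟨x, hx, hxy⟩ => hxy ▸ hmono (le_sSup hx))
  set s : L₂ := sSup (f '' S) with hs
  set A : Set L₁ := {a | a ≤ sSup S ∧ f a ≤ s} with hA
  have key : ∀ c ⊆ A, IsChain (· ≤ ·) c → ∀ y ∈ c, ∃ ub ∈ A, ∀ z ∈ c, z ≤ ub := by
    intro c hcA hc y hy
    refine ⟨sSup c, ⟨sSup_le fun z hz => (hcA hz).1, ?_⟩, fun z hz => le_sSup hz⟩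
    rw [hchain c ⟨y, hy⟩ hc]
    exact sSup_le fun w ⟨z, hz, hzw⟩ => hzw ▸ (hcA hz).2
  obtain ⟨m, -, hmA, hmax⟩ := zorn_le_nonempty₀ A key ⊥ ⟨bot_le, by simp [hbot]⟩
  have hSm : ∀ x ∈ S, x ≤ m := by
    intro x hx
    have hmem : m ⊔ x ∈ A := ⟨sup_le hmA.1 (le_sSup hx), by
      rw [hsup]; exact sup_le hmA.2 (le_sSup ⟨x, hx, rfl⟩)⟩
    exact le_sup_right.trans (hmax hmem le_sup_left)
  have hm : m = sSup S := le_antisymm hmA.1 (sSup_le hSm)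
  exact hm ▸ hmA.2
end

section
/- Let K be an absorptive, fully-continuous commutative semiring. Then multiplication distributes over arbitrary suprema: for every a ∈ K and every set S ⊆ K, a · sSup S = sSup {a · s : s ∈ S} (in particular, (K, sSup, ·) is a quantale with unit 1). -/
/-- Multiplication is monotone for the natural order. -/
lemma afc_mul_mono {K : Type*} [AbsorptiveFC K] (a : K) {b c : K} (h : b ≤ c) :
    a * b ≤ a * c := by
  rw [AbsorptiveFC.le_iff_add] at h ⊢
  rw [← mul_add, h]

/-- in an absorptive, fully-continuous commutative semiring,
multiplication distributes over arbitrary suprema (so `(K, sSup, ·)` is a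
quantale with unit `1`). -/
theorem mul_sSup_set {K : Type*} [AbsorptiveFC K] (a : K) (S : Set K) :
    a * sSup S = sSup ((fun s => a * s) '' S) := by
  set u := sSup ((fun s => a * s) '' S) with hu
  set T : Set K := {x | a * x ≤ u} with hT
  have h0 : (0:K) ∈ T := by
    show a * 0 ≤ u
    rw [mul_zero, AbsorptiveFC.le_iff_add, zero_add]
  have hST : S ⊆ T := fun s hs => le_sSup ⟨s, hs, rfl⟩
  obtain ⟨m, -, hmT, hmax⟩ := zorn_le_nonempty₀ T (fun c hcT hc y hy => by
    refine ⟨sSup c, ?_, fun z hz => le_sSup hz⟩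
    rw [hT, Set.mem_setOf_eq, AbsorptiveFC.mul_sSup_chain a c ⟨y, hy⟩ hc]
    exact sSup_le (by rintro _ ⟨z, hzc, rfl⟩; exact hcT hzc)) 0 h0
  have htop : ∀ x ∈ T, x ≤ m := by
    intro x hx
    have huu : u + u = u := (AbsorptiveFC.le_iff_add u u).mp le_rfl
    have hx' : a * x + u = u := (AbsorptiveFC.le_iff_add _ _).mp hx
    have hm' : a * m + u = u := (AbsorptiveFC.le_iff_add _ _).mp hmT
    have hxm : x + m ∈ T := by
      show a * (x + m) ≤ u
      rw [mul_add, AbsorptiveFC.le_iff_add]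
      calc a*x + a*m + u = a*x + a*m + (u + u) := by rw [huu]
        _ = (a*x + u) + (a*m + u) := by ring
        _ = u := by rw [hx', hm', huu]
    have hmle : m ≤ x + m := by
      rw [AbsorptiveFC.le_iff_add, add_comm m (x + m), add_assoc,
        (AbsorptiveFC.le_iff_add m m).mp le_rfl]
    have hxle : x ≤ x + m := by
      rw [AbsorptiveFC.le_iff_add, ← add_assoc, (AbsorptiveFC.le_iff_add x x).mp le_rfl]
    exact hxle.trans (hmax hxm hmle)
  refine le_antisymm ?_ (sSup_le ?_)
  · calc a * sSup S ≤ a * m := afc_mul_mono a (sSup_le fun s hs => htop s (hST hs))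
      _ ≤ u := hmT
  · rintro _ ⟨s, hs, rfl⟩
    exact afc_mul_mono a (le_sSup hs)
end

section
/- Let K be an absorptive, fully-continuous commutative semiring. Then the infinitary power is multiplicative: for all a, b ∈ K, (a·b)^∞ = a^∞ · b^∞, where x^∞ := ⨅_{n ∈ ℕ} x^n. -/
/-- the infinitary power is multiplicative: `(a·b)^∞ = a^∞ · b^∞`. -/
theorem ipow_mul {K : Type*} [AbsorptiveFC K] (a b : K) :
    ipow (a * b) = ipow a * ipow b := by
  have le_one : ∀ x : K, x ≤ 1 := fun x =>
    (AbsorptiveFC.le_iff_add x 1).mpr (by rw [add_comm]; exact AbsorptiveFC.absorb x)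
  have mulmono : ∀ c x y : K, x ≤ y → c * x ≤ c * y := by
    intro c x y h
    rw [AbsorptiveFC.le_iff_add] at h ⊢
    rw [← mul_add, h]
  have powanti : ∀ (x : K) (n m : ℕ), n ≤ m → x ^ m ≤ x ^ n := by
    intro x n m h
    induction m with
    | zero => simp_all
    | succ m ih =>
      rcases Nat.lt_or_ge n (m + 1) with h' | h'
      · calc x ^ (m + 1) = x ^ m * x := pow_succ x m
          _ ≤ x ^ m * 1 := mulmono _ _ _ (le_one x)
          _ = x ^ m := mul_one _
          _ ≤ x ^ n := ih (Nat.lt_succ_iff.mp h')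
      · have : n = m + 1 := le_antisymm h h'
        simp [this]
  have chain : ∀ x : K, IsChain (· ≤ ·) (Set.range fun n : ℕ => x ^ n) := by
    intro x p hp q hq _
    obtain ⟨n, rfl⟩ := hp; obtain ⟨m, rfl⟩ := hq
    rcases le_total n m with h | h
    · exact Or.inr (powanti x n m h)
    · exact Or.inl (powanti x m n h)
  have key : ∀ c x : K, c * ipow x = ⨅ n : ℕ, c * x ^ n := by
    intro c x
    have h := AbsorptiveFC.mul_sInf_chain c (Set.range fun n : ℕ => x ^ n)
      ⟨x ^ 0, ⟨0, rfl⟩⟩ (chain x)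
    rw [ipow, iInf, h, ← Set.range_comp, iInf]
    rfl
  have step : ipow a * ipow b = ⨅ m : ℕ, ⨅ n : ℕ, a ^ n * b ^ m := by
    rw [key (ipow a) b]
    refine iInf_congr fun m => ?_
    rw [mul_comm (ipow a), key (b ^ m) a]
    exact iInf_congr fun n => mul_comm _ _
  rw [step]
  apply le_antisymm
  · refine le_iInf fun m => le_iInf fun n => ?_
    set N := max n m with hN
    calc ipow (a * b) ≤ (a * b) ^ N := iInf_le _ N
      _ = a ^ N * b ^ N := mul_pow a b N
      _ ≤ a ^ N * b ^ m := mulmono _ _ _ (powanti b m N (le_max_right n m))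
      _ = b ^ m * a ^ N := mul_comm _ _
      _ ≤ b ^ m * a ^ n := mulmono _ _ _ (powanti a n N (le_max_left n m))
      _ = a ^ n * b ^ m := mul_comm _ _
  · refine le_iInf fun k => ?_
    calc (⨅ m : ℕ, ⨅ n : ℕ, a ^ n * b ^ m) ≤ ⨅ n : ℕ, a ^ n * b ^ k := iInf_le _ k
      _ ≤ a ^ k * b ^ k := iInf_le _ k
      _ = (a * b) ^ k := (mul_pow a b k).symm
end

section
/- Every ∞-algebra satisfies the implication: for all a, b, c, if a·c ≤ b·c then a^∞·c ≤ b^∞·c (in the natural order). In particular (taking c = 1), the operation a ↦ a^∞ is monotone: a ≤ b implies a^∞ ≤ b^∞. -/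
/-- An `∞`-algebra: an absorptive commutative semiring with a unary operation
`a ↦ a^∞` satisfying the axioms (∞-abs) `a^∞ = a · a^∞` and
(∞-ind) `b ≤ c + a·b → b ≤ c + a^∞·b`. -/
class InfAlgebra (K : Type*) extends AbsorptiveSemiring K where
  infPow : K → K
  infPow_abs : ∀ a : K, infPow a = a * infPow a
  infPow_ind : ∀ a b c : K, b ≤ c + a * b → b ≤ c + infPow a * b

open InfAlgebra

/-- in every `∞`-algebra, `a·c ≤ b·c` implies `a^∞·c ≤ b^∞·c`;
in particular `a ↦ a^∞` is monotone. -/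
theorem infPow_mul_le {K : Type*} [InfAlgebra K] :
    (∀ a b c : K, a * c ≤ b * c → infPow a * c ≤ infPow b * c) ∧
      (∀ a b : K, a ≤ b → infPow a ≤ infPow b) := by
  have hle : ∀ x y : K, x ≤ y ↔ x + y = y := AbsorptiveSemiring.le_iff_add
  have hmul : ∀ x y z : K, x ≤ y → x * z ≤ y * z := by
    intro x y z h
    rw [hle] at h ⊢
    rw [← add_mul, h]
  have h1 : ∀ x : K, x ≤ (1 : K) := by
    intro x
    rw [hle, add_comm]
    exact AbsorptiveSemiring.absorb x
  have main : ∀ a b c : K, a * c ≤ b * c → infPow a * c ≤ infPow b * c := by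
    intro a b c h
    have e1 : infPow a * c = (a * c) * infPow a := by
      conv_lhs => rw [infPow_abs a]
      ring
    have step : infPow a * c ≤ 0 + b * (infPow a * c) := by
      rw [zero_add]
      conv_lhs => rw [e1]
      have := hmul _ _ (infPow a) h
      calc (a * c) * infPow a ≤ (b * c) * infPow a := this
        _ = b * (infPow a * c) := by ring
    have := infPow_ind b (infPow a * c) 0 step
    rw [zero_add] at this
    refine le_trans this ?_
    calc infPow b * (infPow a * c) = infPow a * (infPow b * c) := by ring
      _ ≤ 1 * (infPow b * c) := hmul _ _ _ (h1 (infPow a))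
      _ = infPow b * c := one_mul _
  refine ⟨main, fun a b h => ?_⟩
  have := main a b 1 (by simpa using h)
  simpa using this
end
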